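/- Fix P ≥ 1 and suppose the sequences (α_k)_{k≥1}, (η_k)_{k≥1} satisfy any one of: (I) α_k = δ^k and η_k = ρ with δ > 2 and ρ > 0; (II) α_k = δ and η_k = ρ^k with δ > 2 and 0 < ρ < 1; (III) α_k = δ^k and η_k = ρ^k with δ > 2 and 0 < ρ < δ. Let (λ_{pk})_{1≤p≤P, k≥1} be mutually independent real random variables with λ_{pk} distributed as GDP(α_k, η_k). Then almost surely, for every p ∈ {1, …, P}, the series ∑_{k=1}^∞ λ_{pk}² converges. -/

import Mathlib

/-!
A GDP(α, η) variable exceeds `t ≥ 0` in absolute value with probability exactly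
`(1 + t/η)^(-α)`, which Bernoulli's inequality bounds by `η / (α t)` once `α ≥ 1`.
Under each of the three conditions there is `r < 1` with `∑ η_k / (α_k r^k) < ∞`, so by
Borel–Cantelli almost surely `|λ_{pk}| ≤ r^k` for all large `k`, and `∑ λ_{pk}²` is dominated
by the geometric series `∑ r^{2k}`.
-/

open MeasureTheory ProbabilityTheory

/-- Density of the generalized double Pareto distribution GDP(α, η). -/
noncomputable def gdpPdf (α η x : ℝ) : ℝ :=
  (α / (2 * η)) * (1 + |x| / η) ^ (-(α + 1))

/-- The generalized double Pareto distribution GDP(α, η) as a measure on ℝ. -/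
noncomputable def gdpMeasure (α η : ℝ) : Measure ℝ :=
  MeasureTheory.volume.withDensity (fun x => ENNReal.ofReal (gdpPdf α η x))

/-- `X` has the GDP(α, η) distribution under `μ`. -/
def HasGDP {Ω : Type*} [MeasurableSpace Ω] (μ : Measure Ω) (X : Ω → ℝ) (α η : ℝ) : Prop :=
  Measurable X ∧ Measure.map X μ = gdpMeasure α η

open Filter Set

section Tail

variable {α η : ℝ}

@[simp]
lemma gdpPdf_neg (x : ℝ) : gdpPdf α η (-x) = gdpPdf α η x := by
  simp only [gdpPdf, abs_neg]

lemma gdpPdf_nonneg (hα : 0 ≤ α) (hη : 0 < η) (x : ℝ) : 0 ≤ gdpPdf α η x :=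
  mul_nonneg (by positivity) (Real.rpow_nonneg (by positivity) _)

lemma measurable_gdpPdf : Measurable (gdpPdf α η) := by
  unfold gdpPdf
  fun_prop

lemma hasDerivAt_gdpPdf_antideriv (hη : 0 < η) {x : ℝ} (hx : 0 ≤ x) :
    HasDerivAt (fun y => -(1 + y / η) ^ (-α) / 2) (gdpPdf α η x) x := by
  have hbase : 0 < 1 + x / η := by positivity
  have hinner : HasDerivAt (fun y : ℝ => 1 + y / η) (1 / η) x := by
    simpa using ((hasDerivAt_id x).div_const η).const_add 1
  refine ((((Real.hasDerivAt_rpow_const (Or.inl hbase.ne')).comp x hinner).neg).div_const 2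
    ).congr_deriv ?_
  rw [gdpPdf, abs_of_nonneg hx, show -(α + 1) = -α - 1 by ring]
  ring

lemma tendsto_gdpPdf_antideriv_atTop (hα : 0 < α) (hη : 0 < η) :
    Tendsto (fun y => -(1 + y / η) ^ (-α) / 2) atTop (nhds 0) := by
  have hbase : Tendsto (fun y : ℝ => 1 + y / η) atTop atTop :=
    tendsto_atTop_add_const_left _ 1 (tendsto_id.atTop_div_const hη)
  simpa using (((tendsto_rpow_neg_atTop hα).comp hbase).neg).div_const 2

lemma gdpMeasure_Ioi (hα : 0 < α) (hη : 0 < η) {t : ℝ} (ht : 0 ≤ t) :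
    gdpMeasure α η (Ioi t) = ENNReal.ofReal ((1 + t / η) ^ (-α) / 2) := by
  have hderiv : ∀ x ∈ Ici t, HasDerivAt (fun y => -(1 + y / η) ^ (-α) / 2) (gdpPdf α η x) x :=
    fun x hx => hasDerivAt_gdpPdf_antideriv hη (ht.trans hx)
  have hpos : ∀ x ∈ Ioi t, 0 ≤ gdpPdf α η x := fun x _ => gdpPdf_nonneg hα.le hη x
  have hlim := tendsto_gdpPdf_antideriv_atTop hα hη
  rw [gdpMeasure, withDensity_apply _ measurableSet_Ioi,
    ← ofReal_integral_eq_lintegral_ofReal (integrableOn_Ioi_deriv_of_nonneg' hderiv hpos hlim)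
      (Eventually.of_forall (gdpPdf_nonneg hα.le hη)),
    integral_Ioi_of_hasDerivAt_of_nonneg' hderiv hpos hlim]
  ring_nf

lemma gdpMeasure_Iio_neg (t : ℝ) : gdpMeasure α η (Iio (-t)) = gdpMeasure α η (Ioi t) := by
  rw [gdpMeasure, withDensity_apply _ measurableSet_Iio, withDensity_apply _ measurableSet_Ioi,
    ← Measure.map_neg_eq_self (volume : Measure ℝ),
    setLIntegral_map measurableSet_Iio measurable_gdpPdf.ennreal_ofReal measurable_neg]
  simp

lemma gdpMeasure_abs_gt (hα : 0 < α) (hη : 0 < η) {t : ℝ} (ht : 0 ≤ t) :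
    gdpMeasure α η {x | t < |x|} = ENNReal.ofReal ((1 + t / η) ^ (-α)) := by
  have hsplit : {x : ℝ | t < |x|} = Iio (-t) ∪ Ioi t := by
    ext x
    simp only [mem_ofPred_eq, mem_union, mem_Iio, mem_Ioi, lt_abs, lt_neg]
    tauto
  have hdisj : Disjoint (Iio (-t)) (Ioi t) :=
    (Iic_disjoint_Ioi (by linarith : -t ≤ t)).mono_left Iio_subset_Iic_self
  have hhalf : 0 ≤ (1 + t / η) ^ (-α) / 2 := by positivity
  rw [hsplit, measure_union hdisj measurableSet_Ioi, gdpMeasure_Iio_neg,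
    gdpMeasure_Ioi hα hη ht, ← ENNReal.ofReal_add hhalf hhalf, add_halves]

lemma one_add_rpow_neg_le {s : ℝ} (hα : 1 ≤ α) (hs : 0 < s) : (1 + s) ^ (-α) ≤ (α * s)⁻¹ := by
  rw [Real.rpow_neg (by positivity)]
  refine inv_anti₀ (by positivity) ?_
  linarith [one_add_mul_self_le_rpow_one_add (by linarith : -1 ≤ s) hα]

lemma gdpMeasure_abs_gt_le (hα : 1 ≤ α) (hη : 0 < η) {t : ℝ} (ht : 0 < t) :
    gdpMeasure α η {x | t < |x|} ≤ ENNReal.ofReal (η / (α * t)) := by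
  rw [gdpMeasure_abs_gt (by linarith) hη ht.le]
  refine ENNReal.ofReal_le_ofReal ((one_add_rpow_neg_le hα (by positivity)).trans_eq ?_)
  field_simp

end Tail

section BorelCantelli

variable {Ω : Type*} [MeasurableSpace Ω] {μ : Measure Ω}

lemma ae_summable_sq_of_tsum_measure_abs_gt_pow_ne_top {X : ℕ → Ω → ℝ} {r : ℝ} (hr0 : 0 ≤ r)
    (hr1 : r < 1) (h : ∑' k, μ {ω | r ^ k < |X k ω|} ≠ ⊤) :
    ∀ᵐ ω ∂μ, Summable fun k => X k ω ^ 2 := by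
  have hgeom : Summable fun k : ℕ => (r ^ 2) ^ k :=
    summable_geometric_of_lt_one (sq_nonneg r) (by nlinarith)
  filter_upwards [ae_eventually_notMem h] with ω hω
  refine hgeom.of_norm_bounded_eventually_nat ?_
  filter_upwards [hω] with k hk
  rw [Real.norm_eq_abs, abs_pow, ← pow_mul, mul_comm, pow_mul]
  exact pow_le_pow_left₀ (abs_nonneg _) (not_lt.mp hk) 2

lemma ae_summable_sq_of_map_eq_gdpMeasure {X : ℕ → Ω → ℝ} {a e : ℕ → ℝ} {r : ℝ}
    (hX : ∀ k, Measurable (X k)) (hlaw : ∀ k, μ.map (X k) = gdpMeasure (a k) (e k))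
    (ha : ∀ k, 1 ≤ a k) (he : ∀ k, 0 < e k) (hr0 : 0 < r) (hr1 : r < 1)
    (hsum : Summable fun k => e k / (a k * r ^ k)) :
    ∀ᵐ ω ∂μ, Summable fun k => X k ω ^ 2 := by
  have htail (k : ℕ) : μ {ω | r ^ k < |X k ω|} ≤ ENNReal.ofReal (e k / (a k * r ^ k)) := by
    have hmeas : MeasurableSet {x : ℝ | r ^ k < |x|} :=
      measurableSet_lt measurable_const measurable_id.abs
    calc μ {ω | r ^ k < |X k ω|} = μ.map (X k) {x | r ^ k < |x|} :=
          (Measure.map_apply (hX k) hmeas).symm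
      _ ≤ _ := hlaw k ▸ gdpMeasure_abs_gt_le (ha k) (he k) (pow_pos hr0 k)
  have hnonneg (k : ℕ) : 0 ≤ e k / (a k * r ^ k) :=
    div_nonneg (he k).le (mul_nonneg (by linarith [ha k]) (by positivity))
  refine ae_summable_sq_of_tsum_measure_abs_gt_pow_ne_top hr0.le hr1
    (ne_top_of_le_ne_top ?_ (ENNReal.tsum_le_tsum htail))
  rw [← ENNReal.ofReal_tsum_of_nonneg hnonneg hsum]
  exact ENNReal.ofReal_ne_top

end BorelCantelli

section Rates

/-- The hypotheses of `ae_summable_sq_of_map_eq_gdpMeasure` for the shifted sequences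
`k ↦ α (k + 1)`, `k ↦ η (k + 1)`. -/
def IsGDPTailRate (α η : ℕ → ℝ) (r : ℝ) : Prop :=
  0 < r ∧ r < 1 ∧ (∀ k, 1 ≤ α (k + 1)) ∧ (∀ k, 0 < η (k + 1)) ∧
    Summable fun k => η (k + 1) / (α (k + 1) * r ^ k)

variable {α η : ℕ → ℝ} {δ ρ : ℝ}

lemma isGDPTailRate_of_eq_geometric {r c q : ℝ} (hr0 : 0 < r) (hr1 : r < 1)
    (hα : ∀ k, 1 ≤ α (k + 1)) (hη : ∀ k, 0 < η (k + 1)) (hq0 : 0 ≤ q) (hq1 : q < 1)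
    (h : ∀ k, η (k + 1) / (α (k + 1) * r ^ k) = c * q ^ k) : IsGDPTailRate α η r :=
  ⟨hr0, hr1, hα, hη, ((summable_geometric_of_lt_one hq0 hq1).mul_left c).congr fun k => (h k).symm⟩

lemma isGDPTailRate_of_pow_const (hδ : 2 < δ) (hρ : 0 < ρ)
    (h : ∀ k, 1 ≤ k → α k = δ ^ k ∧ η k = ρ) : IsGDPTailRate α η (1 / 2) := by
  have hα (k : ℕ) := (h (k + 1) k.succ_pos).1
  have hη (k : ℕ) := (h (k + 1) k.succ_pos).2
  refine isGDPTailRate_of_eq_geometric (c := ρ / δ) (q := 2 / δ) (by norm_num) (by norm_num)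
    (fun k => ?_) (fun k => hη k ▸ hρ) (by positivity) ((div_lt_one (by linarith)).2 hδ)
    (fun k => ?_)
  · exact hα k ▸ one_le_pow₀ (by linarith)
  · rw [hα, hη]
    simp only [div_pow, one_pow, pow_succ]
    field_simp

lemma isGDPTailRate_of_const_pow (hδ : 2 < δ) (hρ : 0 < ρ) (hρ1 : ρ < 1)
    (h : ∀ k, 1 ≤ k → α k = δ ∧ η k = ρ ^ k) : IsGDPTailRate α η ((ρ + 1) / 2) := by
  have hα (k : ℕ) := (h (k + 1) k.succ_pos).1
  have hη (k : ℕ) := (h (k + 1) k.succ_pos).2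
  have hr : 0 < (ρ + 1) / 2 := by positivity
  refine isGDPTailRate_of_eq_geometric (c := ρ / δ) (q := ρ / ((ρ + 1) / 2)) hr (by linarith)
    (fun k => ?_) (fun k => hη k ▸ pow_pos hρ _) (by positivity) ((div_lt_one hr).2 (by linarith))
    (fun k => ?_)
  · linarith [hα k]
  · rw [hα, hη]
    simp only [div_pow, pow_succ]
    field_simp

lemma isGDPTailRate_of_pow_pow (hδ : 2 < δ) (hρ : 0 < ρ) (hρδ : ρ < δ)
    (h : ∀ k, 1 ≤ k → α k = δ ^ k ∧ η k = ρ ^ k) : IsGDPTailRate α η ((ρ + δ) / (2 * δ)) := by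
  have hα (k : ℕ) := (h (k + 1) k.succ_pos).1
  have hη (k : ℕ) := (h (k + 1) k.succ_pos).2
  have hδ0 : 0 < δ := by linarith
  refine isGDPTailRate_of_eq_geometric (c := ρ / δ) (q := 2 * ρ / (ρ + δ)) (by positivity)
    ((div_lt_one (by positivity)).2 (by linarith)) (fun k => ?_) (fun k => hη k ▸ pow_pos hρ _)
    (by positivity) ((div_lt_one (by positivity)).2 (by linarith)) (fun k => ?_)
  · exact hα k ▸ one_le_pow₀ (by linarith)
  · rw [hα, hη]
    simp only [div_pow, mul_pow, pow_succ]
    field_simp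

end Rates

theorem gdp_rows_square_summable_three_conditions_general {Ω : Type*} [MeasurableSpace Ω]
    (μ : Measure Ω) (P : ℕ) (α η : ℕ → ℝ)
    (hcond :
      (∃ δ ρ : ℝ, 2 < δ ∧ 0 < ρ ∧ ∀ k : ℕ, 1 ≤ k → α k = δ ^ k ∧ η k = ρ) ∨
      (∃ δ ρ : ℝ, 2 < δ ∧ 0 < ρ ∧ ρ < 1 ∧ ∀ k : ℕ, 1 ≤ k → α k = δ ∧ η k = ρ ^ k) ∨
      (∃ δ ρ : ℝ, 2 < δ ∧ 0 < ρ ∧ ρ < δ ∧ ∀ k : ℕ, 1 ≤ k → α k = δ ^ k ∧ η k = ρ ^ k))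
    (Λ : Fin P × ℕ → Ω → ℝ) (hmeas : ∀ pk, Measurable (Λ pk))
    (hlaw : ∀ (p : Fin P) (k : ℕ), 1 ≤ k →
      Measure.map (Λ (p, k)) μ = gdpMeasure (α k) (η k)) :
    ∀ᵐ ω ∂μ, ∀ p : Fin P, Summable (fun k : ℕ => (Λ (p, k + 1) ω) ^ 2) := by
  obtain ⟨r, hr⟩ : ∃ r, IsGDPTailRate α η r := by
    rcases hcond with ⟨δ, ρ, hδ, hρ, h⟩ | ⟨δ, ρ, hδ, hρ, hρ1, h⟩ | ⟨δ, ρ, hδ, hρ, hρδ, h⟩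
    · exact ⟨_, isGDPTailRate_of_pow_const hδ hρ h⟩
    · exact ⟨_, isGDPTailRate_of_const_pow hδ hρ hρ1 h⟩
    · exact ⟨_, isGDPTailRate_of_pow_pow hδ hρ hρδ h⟩
  obtain ⟨hr0, hr1, hα, hη, hsum⟩ := hr
  rw [ae_all_iff]
  intro p
  exact ae_summable_sq_of_map_eq_gdpMeasure (fun k => hmeas _)
    (fun k => hlaw p (k + 1) k.succ_pos) hα hη hr0 hr1 hsum

theorem gdp_rows_square_summable_three_conditions {Ω : Type*} [MeasurableSpace Ω]
    (μ : Measure Ω) [IsProbabilityMeasure μ] (P : ℕ) (hP : 0 < P) (α η : ℕ → ℝ)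
    (hcond :
      (∃ δ ρ : ℝ, 2 < δ ∧ 0 < ρ ∧ ∀ k : ℕ, 1 ≤ k → α k = δ ^ k ∧ η k = ρ) ∨
      (∃ δ ρ : ℝ, 2 < δ ∧ 0 < ρ ∧ ρ < 1 ∧ ∀ k : ℕ, 1 ≤ k → α k = δ ∧ η k = ρ ^ k) ∨
      (∃ δ ρ : ℝ, 2 < δ ∧ 0 < ρ ∧ ρ < δ ∧ ∀ k : ℕ, 1 ≤ k → α k = δ ^ k ∧ η k = ρ ^ k))
    (Λ : Fin P × ℕ → Ω → ℝ) (hmeas : ∀ pk, Measurable (Λ pk))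
    (hindep : ProbabilityTheory.iIndepFun Λ μ)
    (hlaw : ∀ (p : Fin P) (k : ℕ), 1 ≤ k →
      Measure.map (Λ (p, k)) μ = gdpMeasure (α k) (η k)) :
    ∀ᵐ ω ∂μ, ∀ p : Fin P, Summable (fun k : ℕ => (Λ (p, k + 1) ω) ^ 2) :=
  gdp_rows_square_summable_three_conditions_general μ P α η hcond Λ hmeas hlaw
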